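/- (Theorem 4, trimming) Let M be a partial matrix over a field F with rows m and columns n, and let v be a partial column on rows m with known row set K ⊆ m. Suppose there are columns d_1, …, d_t of M, each of which is a donor for v (in particular, each column d_i is known at every row in K). If the vector (v r)_{r ∈ K} lies in the F-linear span of the vectors (M r d_1)_{r ∈ K}, …, (M r d_t)_{r ∈ K}, then mr([v | M]) = mr(M). -/

import Mathlib

/-- `N` is a completion of the partial matrix `(M, Ω)`: it agrees with `M`
on all known positions `Ω`. -/
def IsCompletion {F m n : Type*} [Field F] (M : Matrix m n F) (Ω : Set (m × n))
    (N : Matrix m n F) : Prop :=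
  ∀ p ∈ Ω, N p.1 p.2 = M p.1 p.2

/-- The minimum rank of the partial matrix `(M, Ω)`: the minimum of the ranks of
its completions. -/
noncomputable def mr {F m n : Type*} [Field F] [Fintype m] [Fintype n]
    (M : Matrix m n F) (Ω : Set (m × n)) : ℕ :=
  sInf {r | ∃ N : Matrix m n F, IsCompletion M Ω N ∧ N.rank = r}

/-- The partial matrix `[u | A]`: the partial column `u` (with known row set `Ωu`)
adjoined as an extra (first) column to `A`. -/
def augMat {F m n : Type*} [Field F] (u : m → F) (A : Matrix m n F) :
    Matrix m (Unit ⊕ n) F :=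
  Matrix.of fun i => Sum.elim (fun _ => u i) (A i)

/-- Known positions of the partial matrix `[u | A]`, inherited from `Ωu` and `ΩA`. -/
def augSet {m n : Type*} (Ωu : Set m) (ΩA : Set (m × n)) : Set (m × (Unit ⊕ n)) :=
  {p | Sum.elim (fun _ => p.1 ∈ Ωu) (fun j => (p.1, j) ∈ ΩA) p.2}

/-- `zero (u, A) = 1`, as a proposition: every completion of `[u | A]` attaining the
minimum rank has zero `u`-column. -/
def zeroProp {F m n : Type*} [Field F] [Fintype m] [Fintype n]
    (u : m → F) (Ωu : Set m) (A : Matrix m n F) (ΩA : Set (m × n)) : Prop :=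
  ∀ N : Matrix m (Unit ⊕ n) F, IsCompletion (augMat u A) (augSet Ωu ΩA) N →
    N.rank = mr (augMat u A) (augSet Ωu ΩA) → ∀ i, N i (Sum.inl ()) = 0

/-!
Deleting a column never increases rank, so `mr M ≤ mr [v | M]`. Conversely, take a completion
`N` of `M` of rank `mr M`. The donor columns are known on `K`, so there `N` agrees with `M` on
them, and the coefficients expressing `v|K` through the donors define a combination `u` of the
columns of `N` that agrees with `v` on `K`. Then `[u | N]` completes `[v | M]` and has the rank
of `N`.
-/

section Completion

variable {F m n : Type*} [Field F]

theorem isCompletion_augMat_iff {v u : m → F} {K : Set m} {M N : Matrix m n F}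
    {Ω : Set (m × n)} :
    IsCompletion (augMat v M) (augSet K Ω) (augMat u N) ↔
      (∀ r ∈ K, u r = v r) ∧ IsCompletion M Ω N :=
  ⟨fun h => ⟨fun r hr => h (r, Sum.inl ()) hr, fun p hp => h (p.1, Sum.inr p.2) hp⟩,
    fun ⟨hu, hN⟩ => fun
      | (r, Sum.inl ()), hr => hu r hr
      | (r, Sum.inr j), hj => hN (r, j) hj⟩

theorem augMat_col_inl_submatrix_inr (N : Matrix m (Unit ⊕ n) F) :
    augMat (N.col (Sum.inl ())) (N.submatrix id Sum.inr) = N := by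
  ext i (_ | j) <;> rfl

variable [Fintype m] [Fintype n]

theorem exists_isCompletion_rank_eq_mr (M : Matrix m n F) (Ω : Set (m × n)) :
    ∃ N, IsCompletion M Ω N ∧ N.rank = mr M Ω :=
  Nat.sInf_mem (s := {r | ∃ N, IsCompletion M Ω N ∧ N.rank = r})
    ⟨M.rank, M, fun _ _ => rfl, rfl⟩

theorem mr_le_rank {M N : Matrix m n F} {Ω : Set (m × n)} (h : IsCompletion M Ω N) :
    mr M Ω ≤ N.rank :=
  Nat.sInf_le ⟨N, h, rfl⟩

end Completion

section Rank

variable {F m n : Type*} [Field F]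

theorem span_range_col_augMat (u : m → F) (N : Matrix m n F) :
    Submodule.span F (Set.range (augMat u N).col) =
      Submodule.span F (insert u (Set.range N.col)) := by
  have hcol : (augMat u N).col = Sum.elim (fun _ => u) N.col := by
    ext (_ | j) i <;> rfl
  rw [hcol, Set.Sum.elim_range, Set.range_const, Set.singleton_union]

variable [Fintype n]

theorem rank_augMat_of_mem_span {u : m → F} {N : Matrix m n F}
    (h : u ∈ Submodule.span F (Set.range N.col)) :
    (augMat u N).rank = N.rank := by
  rw [Matrix.rank_eq_finrank_span_cols, Matrix.rank_eq_finrank_span_cols,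
    span_range_col_augMat, Submodule.span_insert_eq_span h]

theorem rank_le_rank_augMat [Fintype m] (u : m → F) (N : Matrix m n F) :
    N.rank ≤ (augMat u N).rank := by
  rw [Matrix.rank_eq_finrank_span_cols, Matrix.rank_eq_finrank_span_cols,
    span_range_col_augMat]
  exact Submodule.finrank_mono (Submodule.span_mono (Set.subset_insert _ _))

end Rank

theorem mr_le_mr_augMat {F m n : Type*} [Field F] [Fintype m] [Fintype n]
    (M : Matrix m n F) (Ω : Set (m × n)) (v : m → F) (K : Set m) :
    mr M Ω ≤ mr (augMat v M) (augSet K Ω) := by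
  obtain ⟨N, hN, hNr⟩ := exists_isCompletion_rank_eq_mr (augMat v M) (augSet K Ω)
  rw [← augMat_col_inl_submatrix_inr N, isCompletion_augMat_iff] at hN
  calc mr M Ω ≤ (N.submatrix id Sum.inr).rank := mr_le_rank hN.2
    _ ≤ (augMat (N.col (Sum.inl ())) (N.submatrix id Sum.inr)).rank := rank_le_rank_augMat _ _
    _ = mr (augMat v M) (augSet K Ω) := by rw [augMat_col_inl_submatrix_inr, hNr]

theorem exists_mem_span_eqOn_of_restrict_mem_span {R m ι : Type*} [Semiring R] {K : Set m}
    {w : ι → m → R} {x : m → R}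
    (h : (fun r : K => x r) ∈ Submodule.span R (Set.range fun i (r : K) => w i r)) :
    ∃ u ∈ Submodule.span R (Set.range w), ∀ r ∈ K, u r = x r := by
  let restrict : (m → R) →ₗ[R] K → R := LinearMap.funLeft R R Subtype.val
  have hrange : (Set.range fun i (r : K) => w i r) = restrict '' Set.range w := by
    rw [← Set.range_comp]; rfl
  rw [hrange, ← Submodule.map_span] at h
  obtain ⟨u, hu, hux⟩ := h
  exact ⟨u, hu, fun r hr => congrFun hux ⟨r, hr⟩⟩

/-- Theorem 4 (trimming): let `v` be a partial column with known row set `K`, and let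
`d 1, …, d t` be columns of `M` each of which is a donor for `v` (known at every row
of `K`).  If the restriction of `v` to `K` lies in the span of the restrictions of
these donor columns to `K`, then `mr [v | M] = mr M`. -/
theorem mr_aug_eq_of_donor_span {F m n : Type*} [Field F] [Fintype m] [Fintype n]
    (M : Matrix m n F) (ΩM : Set (m × n)) (v : m → F) (K : Set m)
    {t : ℕ} (d : Fin t → n)
    (hdonor : ∀ (s : Fin t), ∀ r ∈ K, (r, d s) ∈ ΩM)
    (hspan : (fun r : K => v r) ∈
      Submodule.span F (Set.range fun s : Fin t => fun r : K => M r (d s))) :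
    mr (augMat v M) (augSet K ΩM) = mr M ΩM := by
  refine le_antisymm ?_ (mr_le_mr_augMat M ΩM v K)
  obtain ⟨N, hN, hNr⟩ := exists_isCompletion_rank_eq_mr M ΩM
  have hdonorN : (fun s (r : K) => N r (d s)) = fun s (r : K) => M r (d s) := by
    ext s r
    exact hN (r, d s) (hdonor s r r.2)
  rw [← hdonorN] at hspan
  obtain ⟨u, hu, huv⟩ := exists_mem_span_eqOn_of_restrict_mem_span (w := N.col ∘ d) hspan
  calc mr (augMat v M) (augSet K ΩM) ≤ (augMat u N).rank :=
        mr_le_rank (isCompletion_augMat_iff.2 ⟨huv, hN⟩)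
    _ = N.rank :=
        rank_augMat_of_mem_span (Submodule.span_mono (Set.range_comp_subset_range d N.col) hu)
    _ = mr M ΩM := hNr
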